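/- Simulation of the λμ-calculus by the λ̄μμ̃-calculus: if a λμ-term (or command) t reduces to v by one λμ-reduction step (by any of the rules β, μ, μ', ρ, θ), then there exists a λ̄μμ̃-term (or command) u such that t† reduces to u by zero or more λ̄μμ̃-reduction steps and v† reduces to u by zero or more linear λ̄μμ̃-reduction steps. -/

import Mathlib

set_option autoImplicit true

namespace CHSim

/-- Lift a de Bruijn renaming under a binder. -/
def upr (ξ : ℕ → ℕ) : ℕ → ℕ
  | 0 => 0
  | k+1 => ξ k + 1

/-! ## The λμ-calculus (de Bruijn representation).

λ-variables and μ-variables each have their own name space of de Bruijn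
indices.  `abs t` is `λx.t` (binding λ-index 0) and `mabs c` is `μα.c`
(binding μ-index 0); `cmd a t` is the command `[a]t`. -/

mutual
  inductive Tm : Type
    | var : ℕ → Tm
    | abs : Tm → Tm
    | app : Tm → Tm → Tm
    | mabs : Cm → Tm
  inductive Cm : Type
    | cmd : ℕ → Tm → Cm
end

/-- λμ-contexts `e ::= ⟨α⟩ | ⟨β⟩(t ·) | e · t`. -/
inductive Ct : Type
  | cvar : ℕ → Ct
  | push : ℕ → Tm → Ct
  | cons : Ct → Tm → Ct

/-- Filling a λμ-context with a term: `⟨α⟩⟨t⟩ = [α]t`,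
`(⟨β⟩(u ·))⟨t⟩ = [β](u t)`, `(h · u)⟨t⟩ = h⟨t u⟩`. -/
def fill : Ct → Tm → Cm
  | .cvar a, t => .cmd a t
  | .push b u, t => .cmd b (.app u t)
  | .cons h u, t => fill h (.app t u)

mutual
  /-- Renaming of λ-variables in λμ-terms. -/
  def renLT (ξ : ℕ → ℕ) : Tm → Tm
    | .var x => .var (ξ x)
    | .abs t => .abs (renLT (upr ξ) t)
    | .app t u => .app (renLT ξ t) (renLT ξ u)
    | .mabs c => .mabs (renLC ξ c)
  /-- Renaming of λ-variables in λμ-commands. -/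
  def renLC (ξ : ℕ → ℕ) : Cm → Cm
    | .cmd a t => .cmd a (renLT ξ t)
end

mutual
  /-- Renaming of μ-variables in λμ-terms. -/
  def renMT (ξ : ℕ → ℕ) : Tm → Tm
    | .var x => .var x
    | .abs t => .abs (renMT ξ t)
    | .app t u => .app (renMT ξ t) (renMT ξ u)
    | .mabs c => .mabs (renMC (upr ξ) c)
  /-- Renaming of μ-variables in λμ-commands. -/
  def renMC (ξ : ℕ → ℕ) : Cm → Cm
    | .cmd a t => .cmd (ξ a) (renMT ξ t)
end

/-- Renaming of λ-variables in λμ-contexts. -/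
def renLE (ξ : ℕ → ℕ) : Ct → Ct
  | .cvar a => .cvar a
  | .push b t => .push b (renLT ξ t)
  | .cons e t => .cons (renLE ξ e) (renLT ξ t)

/-- Renaming of μ-variables in λμ-contexts. -/
def renME (ξ : ℕ → ℕ) : Ct → Ct
  | .cvar a => .cvar (ξ a)
  | .push b t => .push (ξ b) (renMT ξ t)
  | .cons e t => .cons (renME ξ e) (renMT ξ t)

/-- Lifting a λ-substitution under a λ-binder. -/
def upsL (σ : ℕ → Tm) : ℕ → Tm
  | 0 => .var 0
  | k+1 => renLT Nat.succ (σ k)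

mutual
  /-- (Capture-avoiding) substitution for λ-variables in λμ-terms. -/
  def lsubT (σ : ℕ → Tm) : Tm → Tm
    | .var x => σ x
    | .abs t => .abs (lsubT (upsL σ) t)
    | .app t u => .app (lsubT σ t) (lsubT σ u)
    | .mabs c => .mabs (lsubC (fun k => renMT Nat.succ (σ k)) c)
  /-- Substitution for λ-variables in λμ-commands. -/
  def lsubC (σ : ℕ → Tm) : Cm → Cm
    | .cmd a t => .cmd a (lsubT σ t)
end

/-- Substitution for λ-variables in λμ-contexts. -/
def lsubE (σ : ℕ → Tm) : Ct → Ct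
  | .cvar a => .cvar a
  | .push b t => .push b (lsubT σ t)
  | .cons e t => .cons (lsubE σ e) (lsubT σ t)

/-- The substitution replacing the λ-variable `x` by `u`. -/
def sub1L (x : ℕ) (u : Tm) : ℕ → Tm := fun k => if k = x then u else .var k

/-- The β-substitution replacing the bound λ-variable 0 by `u`. -/
def sub0L (u : Tm) : ℕ → Tm
  | 0 => u
  | k+1 => .var k

/-- Lifting a structural (μ-)substitution under a μ-binder. -/
def upsM (σ : ℕ → Ct) : ℕ → Ct
  | 0 => .cvar 0
  | k+1 => renME Nat.succ (σ k)

mutual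
  /-- Structural substitution of λμ-contexts for μ-variables in λμ-terms:
  every subcommand `[α]u` is replaced by `(σ α)⟨u[σ]⟩`. -/
  def msubT (σ : ℕ → Ct) : Tm → Tm
    | .var x => .var x
    | .abs t => .abs (msubT (fun k => renLE Nat.succ (σ k)) t)
    | .app t u => .app (msubT σ t) (msubT σ u)
    | .mabs c => .mabs (msubC (upsM σ) c)
  /-- Structural substitution in λμ-commands. -/
  def msubC (σ : ℕ → Ct) : Cm → Cm
    | .cmd a t => fill (σ a) (msubT σ t)
end

/-- Structural substitution in λμ-contexts (the head variable of
`⟨β⟩(t ·)` is, by the freshness convention of the translations,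
never the substituted variable, so it is left untouched). -/
def msubE (σ : ℕ → Ct) : Ct → Ct
  | .cvar a => σ a
  | .push b t => .push b (msubT σ t)
  | .cons e t => .cons (msubE σ e) (msubT σ t)

/-- The structural substitution replacing the μ-variable `a` by the context `e`. -/
def sub1M (a : ℕ) (e : Ct) : ℕ → Ct := fun k => if k = a then e else .cvar k

/-- The structural substitution replacing the bound μ-variable 0 by the
context `e` (removing the binder). -/
def sub0M (e : Ct) : ℕ → Ct
  | 0 => e
  | k+1 => .cvar k

mutual
  /-- Number of free occurrences of the λ-variable `x` in a λμ-term. -/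
  def cntLT (x : ℕ) : Tm → ℕ
    | .var y => if y = x then 1 else 0
    | .abs t => cntLT (x+1) t
    | .app t u => cntLT x t + cntLT x u
    | .mabs c => cntLC x c
  /-- Number of free occurrences of the λ-variable `x` in a λμ-command. -/
  def cntLC (x : ℕ) : Cm → ℕ
    | .cmd _ t => cntLT x t
end

/-- λμ-values `v ::= x | λx.t`. -/
inductive IsVal : Tm → Prop
  | var (x : ℕ) : IsVal (.var x)
  | abs (t : Tm) : IsVal (.abs t)

/-! ### Reduction in λμ: congruence closure of root rules -/

mutual
  /-- Congruence (compatible) closure of root relations, term level. -/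
  inductive KT (R1 : Tm → Tm → Prop) (R2 : Cm → Cm → Prop) : Tm → Tm → Prop
    | root {t t'} : R1 t t' → KT R1 R2 t t'
    | absC {t t'} : KT R1 R2 t t' → KT R1 R2 (.abs t) (.abs t')
    | appL {t t'} (u) : KT R1 R2 t t' → KT R1 R2 (.app t u) (.app t' u)
    | appR (t) {u u'} : KT R1 R2 u u' → KT R1 R2 (.app t u) (.app t u')
    | mabsC {c c'} : KC R1 R2 c c' → KT R1 R2 (.mabs c) (.mabs c')
  /-- Congruence (compatible) closure of root relations, command level. -/
  inductive KC (R1 : Tm → Tm → Prop) (R2 : Cm → Cm → Prop) : Cm → Cm → Prop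
    | root {c c'} : R2 c c' → KC R1 R2 c c'
    | cmdC (a) {t t'} : KT R1 R2 t t' → KC R1 R2 (.cmd a t) (.cmd a t')
end

/-- Term-level root rules of the undirected λμ-calculus: β, μ, μ', θ. -/
inductive RootT : Tm → Tm → Prop
  | beta (u t : Tm) : RootT (.app (.abs u) t) (lsubT (sub0L t) u)
  | mu (c : Cm) (t : Tm) : RootT (.app (.mabs c) t)
      (.mabs (msubC (sub1M 0 (.cons (.cvar 0) (renMT Nat.succ t))) c))
  | mu' (t : Tm) (c : Cm) : RootT (.app t (.mabs c))
      (.mabs (msubC (sub1M 0 (.push 0 (renMT Nat.succ t))) c))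
  | theta (t : Tm) : RootT (.mabs (.cmd 0 (renMT Nat.succ t))) t

/-- Command-level root rule of the λμ-calculus: ρ. -/
inductive RootC : Cm → Cm → Prop
  | rho (b : ℕ) (c : Cm) : RootC (.cmd b (.mabs c)) (msubC (sub0M (.cvar b)) c)

/-- Term-level *linear* root rules of the λμ-calculus: θ, and β when the
argument is a variable or the bound variable occurs exactly once. -/
inductive RootTlin : Tm → Tm → Prop
  | beta (u t : Tm) : ((∃ y, t = Tm.var y) ∨ cntLT 0 u = 1) →
      RootTlin (.app (.abs u) t) (lsubT (sub0L t) u)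
  | theta (t : Tm) : RootTlin (.mabs (.cmd 0 (renMT Nat.succ t))) t

/-- Term-level root rules of call-by-name λμ: β, μ, θ (no μ'). -/
inductive RootTn : Tm → Tm → Prop
  | beta (u t : Tm) : RootTn (.app (.abs u) t) (lsubT (sub0L t) u)
  | mu (c : Cm) (t : Tm) : RootTn (.app (.mabs c) t)
      (.mabs (msubC (sub1M 0 (.cons (.cvar 0) (renMT Nat.succ t))) c))
  | theta (t : Tm) : RootTn (.mabs (.cmd 0 (renMT Nat.succ t))) t

/-- Term-level root rules of call-by-value λμ: βv, μv, μ', θ. -/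
inductive RootTv : Tm → Tm → Prop
  | betav (u t : Tm) : IsVal t → RootTv (.app (.abs u) t) (lsubT (sub0L t) u)
  | muv (c : Cm) (t : Tm) : IsVal t → RootTv (.app (.mabs c) t)
      (.mabs (msubC (sub1M 0 (.cons (.cvar 0) (renMT Nat.succ t))) c))
  | mu' (t : Tm) (c : Cm) : RootTv (.app t (.mabs c))
      (.mabs (msubC (sub1M 0 (.push 0 (renMT Nat.succ t))) c))
  | theta (t : Tm) : RootTv (.mabs (.cmd 0 (renMT Nat.succ t))) t

/-- Term-level *linear call-by-value* root rules of λμ. -/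
inductive RootTvlin : Tm → Tm → Prop
  | betav (u t : Tm) : IsVal t → ((∃ y, t = Tm.var y) ∨ cntLT 0 u = 1) →
      RootTvlin (.app (.abs u) t) (lsubT (sub0L t) u)
  | theta (t : Tm) : RootTvlin (.mabs (.cmd 0 (renMT Nat.succ t))) t

/-- One-step λμ-reduction (β, μ, μ', ρ, θ), terms. -/
abbrev StepT := KT RootT RootC
/-- One-step λμ-reduction (β, μ, μ', ρ, θ), commands. -/
abbrev StepC := KC RootT RootC
/-- One-step linear λμ-reduction, terms. -/
abbrev LStepT := KT RootTlin RootC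
/-- One-step linear λμ-reduction, commands. -/
abbrev LStepC := KC RootTlin RootC
/-- One-step call-by-name λμ-reduction, terms. -/
abbrev StepNT := KT RootTn RootC
/-- One-step call-by-name λμ-reduction, commands. -/
abbrev StepNC := KC RootTn RootC
/-- One-step call-by-value λμ-reduction, terms. -/
abbrev StepVT := KT RootTv RootC
/-- One-step call-by-value λμ-reduction, commands. -/
abbrev StepVC := KC RootTv RootC
/-- One-step linear call-by-value λμ-reduction, terms. -/
abbrev LStepVT := KT RootTvlin RootC
/-- One-step linear call-by-value λμ-reduction, commands. -/
abbrev LStepVC := KC RootTvlin RootC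

/-- Reflexive-transitive closure. -/
abbrev Star {α : Type} (r : α → α → Prop) : α → α → Prop := Relation.ReflTransGen r

/-! ## The λ̄μμ̃-calculus (de Bruijn representation). -/

mutual
  inductive BTm : Type
    | var : ℕ → BTm
    | abs : BTm → BTm
    | mabs : BCm → BTm
  inductive BCm : Type
    | cut : BTm → BCt → BCm
  inductive BCt : Type
    | cvar : ℕ → BCt
    | cons : BTm → BCt → BCt
    | tmu : BCm → BCt
end

mutual
  /-- Renaming of λ-variables in λ̄μμ̃-terms. -/
  def brenLT (ξ : ℕ → ℕ) : BTm → BTm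
    | .var x => .var (ξ x)
    | .abs t => .abs (brenLT (upr ξ) t)
    | .mabs c => .mabs (brenLC ξ c)
  def brenLC (ξ : ℕ → ℕ) : BCm → BCm
    | .cut t e => .cut (brenLT ξ t) (brenLE ξ e)
  def brenLE (ξ : ℕ → ℕ) : BCt → BCt
    | .cvar a => .cvar a
    | .cons t e => .cons (brenLT ξ t) (brenLE ξ e)
    | .tmu c => .tmu (brenLC (upr ξ) c)
end

mutual
  /-- Renaming of μ-variables in λ̄μμ̃-terms. -/
  def brenMT (ξ : ℕ → ℕ) : BTm → BTm
    | .var x => .var x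
    | .abs t => .abs (brenMT ξ t)
    | .mabs c => .mabs (brenMC (upr ξ) c)
  def brenMC (ξ : ℕ → ℕ) : BCm → BCm
    | .cut t e => .cut (brenMT ξ t) (brenME ξ e)
  def brenME (ξ : ℕ → ℕ) : BCt → BCt
    | .cvar a => .cvar (ξ a)
    | .cons t e => .cons (brenMT ξ t) (brenME ξ e)
    | .tmu c => .tmu (brenMC ξ c)
end

def bupsL (σ : ℕ → BTm) : ℕ → BTm
  | 0 => .var 0
  | k+1 => brenLT Nat.succ (σ k)

mutual
  /-- Substitution for λ-variables in λ̄μμ̃-terms. -/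
  def blsubT (σ : ℕ → BTm) : BTm → BTm
    | .var x => σ x
    | .abs t => .abs (blsubT (bupsL σ) t)
    | .mabs c => .mabs (blsubC (fun k => brenMT Nat.succ (σ k)) c)
  def blsubC (σ : ℕ → BTm) : BCm → BCm
    | .cut t e => .cut (blsubT σ t) (blsubE σ e)
  def blsubE (σ : ℕ → BTm) : BCt → BCt
    | .cvar a => .cvar a
    | .cons t e => .cons (blsubT σ t) (blsubE σ e)
    | .tmu c => .tmu (blsubC (bupsL σ) c)
end

def bsub1L (x : ℕ) (u : BTm) : ℕ → BTm := fun k => if k = x then u else .var k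

def bsub0L (u : BTm) : ℕ → BTm
  | 0 => u
  | k+1 => .var k

def bupsM (σ : ℕ → BCt) : ℕ → BCt
  | 0 => .cvar 0
  | k+1 => brenME Nat.succ (σ k)

mutual
  /-- Structural substitution of contexts for μ-variables in λ̄μμ̃-terms. -/
  def bmsubT (σ : ℕ → BCt) : BTm → BTm
    | .var x => .var x
    | .abs t => .abs (bmsubT (fun k => brenLE Nat.succ (σ k)) t)
    | .mabs c => .mabs (bmsubC (bupsM σ) c)
  def bmsubC (σ : ℕ → BCt) : BCm → BCm
    | .cut t e => .cut (bmsubT σ t) (bmsubE σ e)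
  def bmsubE (σ : ℕ → BCt) : BCt → BCt
    | .cvar a => σ a
    | .cons t e => .cons (bmsubT σ t) (bmsubE σ e)
    | .tmu c => .tmu (bmsubC (fun k => brenLE Nat.succ (σ k)) c)
end

def bsub1M (a : ℕ) (e : BCt) : ℕ → BCt := fun k => if k = a then e else .cvar k

def bsub0M (e : BCt) : ℕ → BCt
  | 0 => e
  | k+1 => .cvar k

mutual
  /-- Number of free occurrences of the λ-variable `x` in a λ̄μμ̃-term. -/
  def bcntLT (x : ℕ) : BTm → ℕ
    | .var y => if y = x then 1 else 0
    | .abs t => bcntLT (x+1) t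
    | .mabs c => bcntLC x c
  def bcntLC (x : ℕ) : BCm → ℕ
    | .cut t e => bcntLT x t + bcntLE x e
  def bcntLE (x : ℕ) : BCt → ℕ
    | .cvar _ => 0
    | .cons t e => bcntLT x t + bcntLE x e
    | .tmu c => bcntLC (x+1) c
end

mutual
  /-- Number of free occurrences of the μ-variable `a` in a λ̄μμ̃-term. -/
  def bcntMT (a : ℕ) : BTm → ℕ
    | .var _ => 0
    | .abs t => bcntMT a t
    | .mabs c => bcntMC (a+1) c
  def bcntMC (a : ℕ) : BCm → ℕ
    | .cut t e => bcntMT a t + bcntME a e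
  def bcntME (a : ℕ) : BCt → ℕ
    | .cvar b => if b = a then 1 else 0
    | .cons t e => bcntMT a t + bcntME a e
    | .tmu c => bcntMC a c
end

/-- λ̄μμ̃-values `v ::= x | λx.t`. -/
inductive BIsVal : BTm → Prop
  | var (x : ℕ) : BIsVal (.var x)
  | abs (t : BTm) : BIsVal (.abs t)

/-- Stacks (the contexts of λ̄μμ̃_T): `s ::= α | t · s`. -/
inductive IsStk : BCt → Prop
  | cvar (a : ℕ) : IsStk (.cvar a)
  | cons (t : BTm) {s : BCt} : IsStk s → IsStk (.cons t s)

/-! ### Reduction in λ̄μμ̃: congruence closure of root rules -/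

mutual
  inductive JT (R1 : BTm → BTm → Prop) (R2 : BCm → BCm → Prop) : BTm → BTm → Prop
    | root {t t'} : R1 t t' → JT R1 R2 t t'
    | absC {t t'} : JT R1 R2 t t' → JT R1 R2 (.abs t) (.abs t')
    | mabsC {c c'} : JC R1 R2 c c' → JT R1 R2 (.mabs c) (.mabs c')
  inductive JC (R1 : BTm → BTm → Prop) (R2 : BCm → BCm → Prop) : BCm → BCm → Prop
    | root {c c'} : R2 c c' → JC R1 R2 c c'
    | cutL {t t'} (e) : JT R1 R2 t t' → JC R1 R2 (.cut t e) (.cut t' e)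
    | cutR (t) {e e'} : JE R1 R2 e e' → JC R1 R2 (.cut t e) (.cut t e')
  inductive JE (R1 : BTm → BTm → Prop) (R2 : BCm → BCm → Prop) : BCt → BCt → Prop
    | consL {t t'} (e) : JT R1 R2 t t' → JE R1 R2 (.cons t e) (.cons t' e)
    | consR (t) {e e'} : JE R1 R2 e e' → JE R1 R2 (.cons t e) (.cons t e')
    | tmuC {c c'} : JC R1 R2 c c' → JE R1 R2 (.tmu c) (.tmu c')
end

/-- The term-level root rule of λ̄μμ̃: θ (shared by all evaluation disciplines). -/
inductive BRootT : BTm → BTm → Prop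
  | theta (t : BTm) : BRootT (.mabs (.cut (brenMT Nat.succ t) (.cvar 0))) t

/-- Command-level root rules of the undirected λ̄μμ̃-calculus: β, μ, μ̃. -/
inductive BRootC : BCm → BCm → Prop
  | beta (u t : BTm) (e : BCt) :
      BRootC (.cut (.abs u) (.cons t e)) (.cut t (.tmu (.cut u (brenLE Nat.succ e))))
  | mu (c : BCm) (e : BCt) : BRootC (.cut (.mabs c) e) (bmsubC (bsub0M e) c)
  | mutilde (t : BTm) (c : BCm) : BRootC (.cut t (.tmu c)) (blsubC (bsub0L t) c)

/-- Command-level *linear* root rules of λ̄μμ̃: β always; μ (resp. μ̃) when the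
substituted context (resp. term) is a variable or the bound variable occurs
exactly once in the command. -/
inductive BRootClin : BCm → BCm → Prop
  | beta (u t : BTm) (e : BCt) :
      BRootClin (.cut (.abs u) (.cons t e)) (.cut t (.tmu (.cut u (brenLE Nat.succ e))))
  | mu (c : BCm) (e : BCt) : ((∃ a, e = BCt.cvar a) ∨ bcntMC 0 c = 1) →
      BRootClin (.cut (.mabs c) e) (bmsubC (bsub0M e) c)
  | mutilde (t : BTm) (c : BCm) : ((∃ x, t = BTm.var x) ∨ bcntLC 0 c = 1) →
      BRootClin (.cut t (.tmu c)) (blsubC (bsub0L t) c)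

/-- Command-level root rules of call-by-name λ̄μμ̃ (λ̄μμ̃_T): β, μₙ (stacks), μ̃. -/
inductive BRootCn : BCm → BCm → Prop
  | beta (u t : BTm) (e : BCt) :
      BRootCn (.cut (.abs u) (.cons t e)) (.cut t (.tmu (.cut u (brenLE Nat.succ e))))
  | mun (c : BCm) (s : BCt) : IsStk s → BRootCn (.cut (.mabs c) s) (bmsubC (bsub0M s) c)
  | mutilde (t : BTm) (c : BCm) : BRootCn (.cut t (.tmu c)) (blsubC (bsub0L t) c)

/-- Command-level *linear call-by-name* root rules of λ̄μμ̃. -/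
inductive BRootCnlin : BCm → BCm → Prop
  | beta (u t : BTm) (e : BCt) :
      BRootCnlin (.cut (.abs u) (.cons t e)) (.cut t (.tmu (.cut u (brenLE Nat.succ e))))
  | mun (c : BCm) (s : BCt) : IsStk s → ((∃ a, s = BCt.cvar a) ∨ bcntMC 0 c = 1) →
      BRootCnlin (.cut (.mabs c) s) (bmsubC (bsub0M s) c)
  | mutilde (t : BTm) (c : BCm) : ((∃ x, t = BTm.var x) ∨ bcntLC 0 c = 1) →
      BRootCnlin (.cut t (.tmu c)) (blsubC (bsub0L t) c)

/-- Command-level root rules of call-by-value λ̄μμ̃ (λ̄μμ̃_Q): β, μ, μ̃ᵥ (values). -/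
inductive BRootCv : BCm → BCm → Prop
  | beta (u t : BTm) (e : BCt) :
      BRootCv (.cut (.abs u) (.cons t e)) (.cut t (.tmu (.cut u (brenLE Nat.succ e))))
  | mu (c : BCm) (e : BCt) : BRootCv (.cut (.mabs c) e) (bmsubC (bsub0M e) c)
  | mutildev (v : BTm) (c : BCm) : BIsVal v →
      BRootCv (.cut v (.tmu c)) (blsubC (bsub0L v) c)

/-- Command-level *linear call-by-value* root rules of λ̄μμ̃. -/
inductive BRootCvlin : BCm → BCm → Prop
  | beta (u t : BTm) (e : BCt) :
      BRootCvlin (.cut (.abs u) (.cons t e)) (.cut t (.tmu (.cut u (brenLE Nat.succ e))))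
  | mu (c : BCm) (e : BCt) : ((∃ a, e = BCt.cvar a) ∨ bcntMC 0 c = 1) →
      BRootCvlin (.cut (.mabs c) e) (bmsubC (bsub0M e) c)
  | mutildev (v : BTm) (c : BCm) : BIsVal v → ((∃ x, v = BTm.var x) ∨ bcntLC 0 c = 1) →
      BRootCvlin (.cut v (.tmu c)) (blsubC (bsub0L v) c)

/-- Command-level root rules with β' instead of β: β', μ, μ̃. -/
inductive BRootCp : BCm → BCm → Prop
  | beta' (u t : BTm) (e : BCt) :
      BRootCp (.cut (.abs u) (.cons t e)) (.cut (blsubT (bsub0L t) u) e)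
  | mu (c : BCm) (e : BCt) : BRootCp (.cut (.mabs c) e) (bmsubC (bsub0M e) c)
  | mutilde (t : BTm) (c : BCm) : BRootCp (.cut t (.tmu c)) (blsubC (bsub0L t) c)

/-- Command-level call-by-name root rules with β': β', μₙ, μ̃. -/
inductive BRootCnp : BCm → BCm → Prop
  | beta' (u t : BTm) (e : BCt) :
      BRootCnp (.cut (.abs u) (.cons t e)) (.cut (blsubT (bsub0L t) u) e)
  | mun (c : BCm) (s : BCt) : IsStk s → BRootCnp (.cut (.mabs c) s) (bmsubC (bsub0M s) c)
  | mutilde (t : BTm) (c : BCm) : BRootCnp (.cut t (.tmu c)) (blsubC (bsub0L t) c)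

/-- Command-level call-by-value root rules with β': β' (values), μ, μ̃ᵥ. -/
inductive BRootCvp : BCm → BCm → Prop
  | beta' (u v : BTm) (e : BCt) : BIsVal v →
      BRootCvp (.cut (.abs u) (.cons v e)) (.cut (blsubT (bsub0L v) u) e)
  | mu (c : BCm) (e : BCt) : BRootCvp (.cut (.mabs c) e) (bmsubC (bsub0M e) c)
  | mutildev (v : BTm) (c : BCm) : BIsVal v →
      BRootCvp (.cut v (.tmu c)) (blsubC (bsub0L v) c)

/-- One-step λ̄μμ̃-reduction (β, μ, μ̃, θ), terms. -/
abbrev BStepT := JT BRootT BRootC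
abbrev BStepC := JC BRootT BRootC
abbrev BStepE := JE BRootT BRootC
/-- One-step linear λ̄μμ̃-reduction. -/
abbrev LBStepT := JT BRootT BRootClin
abbrev LBStepC := JC BRootT BRootClin
abbrev LBStepE := JE BRootT BRootClin
/-- One-step call-by-name λ̄μμ̃-reduction. -/
abbrev BStepNT := JT BRootT BRootCn
abbrev BStepNC := JC BRootT BRootCn
abbrev BStepNE := JE BRootT BRootCn
/-- One-step linear call-by-name λ̄μμ̃-reduction. -/
abbrev LBStepNT := JT BRootT BRootCnlin
abbrev LBStepNC := JC BRootT BRootCnlin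
/-- One-step call-by-value λ̄μμ̃-reduction. -/
abbrev BStepVT := JT BRootT BRootCv
abbrev BStepVC := JC BRootT BRootCv
/-- One-step linear call-by-value λ̄μμ̃-reduction. -/
abbrev LBStepVT := JT BRootT BRootCvlin
abbrev LBStepVC := JC BRootT BRootCvlin
/-- One-step λ̄μμ̃-reduction with β' (β', μ, μ̃, θ). -/
abbrev BStepPT := JT BRootT BRootCp
abbrev BStepPC := JC BRootT BRootCp
/-- One-step call-by-name λ̄μμ̃-reduction with β'. -/
abbrev BStepNPT := JT BRootT BRootCnp
abbrev BStepNPC := JC BRootT BRootCnp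
/-- One-step call-by-value λ̄μμ̃-reduction with β'. -/
abbrev BStepVPT := JT BRootT BRootCvp
abbrev BStepVPC := JC BRootT BRootCvp

/-! ## The translation `(·)†` from λμ to λ̄μμ̃ -/

mutual
  /-- `x† = x`, `(λx.u)† = λx.u†`, `(u v)† = μβ.⟨v† | μ̃y.⟨u† | y·β⟩⟩`
  (`y`, `β` fresh, realized by de Bruijn lifting), `(μα.c)† = μα.c†`. -/
  def dagT : Tm → BTm
    | .var x => .var x
    | .abs t => .abs (dagT t)
    | .app u v => .mabs (.cut (brenMT Nat.succ (dagT v))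
        (.tmu (.cut (brenLT Nat.succ (brenMT Nat.succ (dagT u)))
          (.cons (.var 0) (.cvar 0)))))
    | .mabs c => .mabs (dagC c)
  /-- `([α]t)† = ⟨t† | α⟩`. -/
  def dagC : Cm → BCm
    | .cmd a t => .cut (dagT t) (.cvar a)
end

/-- `⟨α⟩† = α`, `(⟨β⟩(t ·))† = μ̃y.⟨t† | y·β⟩`, `(h · t)† = t† · h†`. -/
def dagE : Ct → BCt
  | .cvar a => .cvar a
  | .push b t => .tmu (.cut (brenLT Nat.succ (dagT t)) (.cons (.var 0) (.cvar b)))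
  | .cons e t => .cons (dagT t) (dagE e)

/-! ## The translation `(·)∘` from λ̄μμ̃ to λμ -/

mutual
  /-- `x∘ = x`, `(λx.u)∘ = λx.u∘`, `(μα.c)∘ = μα.c∘`. -/
  def circT : BTm → Tm
    | .var x => .var x
    | .abs t => .abs (circT t)
    | .mabs c => .mabs (circC c)
  /-- `⟨t | e⟩∘ = e∘⟨t∘⟩`. -/
  def circC : BCm → Cm
    | .cut t e => fill (circE e) (circT t)
  /-- `α∘ = ⟨α⟩`, `(t · h)∘ = h∘ · t∘`,
  `(μ̃x.c)∘ = ⟨β⟩((λx.μδ.c∘) ·)` with `δ ∉ c` (realized by lifting). -/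
  def circE : BCt → Ct
    | .cvar a => .cvar a
    | .cons t e => .cons (circE e) (circT t)
    | .tmu c => .push 0 (.abs (.mabs (renMC Nat.succ (circC c))))
end

/-!
Write `(u v)† = μβ.⟨v† | μ̃y.⟨u† | y · β⟩⟩`. Since `β` and `y` occur exactly once, plugging a
translated application into any context costs two linear steps,
`⟨(u v)† | e⟩ →μ ⟨v† | μ̃y.⟨u† | y · e⟩⟩ →μ̃ ⟨u† | v† · e⟩`. Iterating, the translation of a filled
λμ-context `e⟨t⟩` reduces linearly to `⟨t† | e†⟩`, hence the translation of a structural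
substitution `t[α := e]` reduces linearly to the λ̄μμ̃-substitution `t†[α := e†]`. This is what
lets the reduct side catch up: μ, μ' and ρ are simulated by one μ-step (after a μ̃-step for μ)
producing `c†[α := e†]`, β by μ̃, β, μ̃ and θ, and θ by θ. Compatible closure goes through because
λ̄μμ̃-reduction is stable under renamings and the translation commutes with renamings and
λ-substitution.
-/

theorem upr_comp (ξ ζ : ℕ → ℕ) : upr ξ ∘ upr ζ = upr (ξ ∘ ζ) := by
  funext k; cases k <;> rfl

theorem upr_comp_succ (ξ : ℕ → ℕ) : upr ξ ∘ Nat.succ = Nat.succ ∘ ξ := rfl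

mutual
theorem brenLT_brenLT (ξ ζ : ℕ → ℕ) : ∀ t, brenLT ξ (brenLT ζ t) = brenLT (ξ ∘ ζ) t
  | .var _ => rfl
  | .abs t => by simp only [brenLT, brenLT_brenLT _ _ t, upr_comp]
  | .mabs c => by simp only [brenLT, brenLC_brenLC ξ ζ c]
theorem brenLC_brenLC (ξ ζ : ℕ → ℕ) : ∀ c, brenLC ξ (brenLC ζ c) = brenLC (ξ ∘ ζ) c
  | .cut t e => by simp only [brenLC, brenLT_brenLT ξ ζ t, brenLE_brenLE ξ ζ e]
theorem brenLE_brenLE (ξ ζ : ℕ → ℕ) : ∀ e, brenLE ξ (brenLE ζ e) = brenLE (ξ ∘ ζ) e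
  | .cvar _ => rfl
  | .cons t e => by simp only [brenLE, brenLT_brenLT ξ ζ t, brenLE_brenLE ξ ζ e]
  | .tmu c => by simp only [brenLE, brenLC_brenLC _ _ c, upr_comp]
end

mutual
theorem brenMT_brenMT (ξ ζ : ℕ → ℕ) : ∀ t, brenMT ξ (brenMT ζ t) = brenMT (ξ ∘ ζ) t
  | .var _ => rfl
  | .abs t => by simp only [brenMT, brenMT_brenMT ξ ζ t]
  | .mabs c => by simp only [brenMT, brenMC_brenMC _ _ c, upr_comp]
theorem brenMC_brenMC (ξ ζ : ℕ → ℕ) : ∀ c, brenMC ξ (brenMC ζ c) = brenMC (ξ ∘ ζ) c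
  | .cut t e => by simp only [brenMC, brenMT_brenMT ξ ζ t, brenME_brenME ξ ζ e]
theorem brenME_brenME (ξ ζ : ℕ → ℕ) : ∀ e, brenME ξ (brenME ζ e) = brenME (ξ ∘ ζ) e
  | .cvar _ => rfl
  | .cons t e => by simp only [brenME, brenMT_brenMT ξ ζ t, brenME_brenME ξ ζ e]
  | .tmu c => by simp only [brenME, brenMC_brenMC ξ ζ c]
end

mutual
theorem brenLT_brenMT (ξ ζ : ℕ → ℕ) : ∀ t, brenLT ξ (brenMT ζ t) = brenMT ζ (brenLT ξ t)
  | .var _ => rfl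
  | .abs t => congrArg BTm.abs (brenLT_brenMT (upr ξ) ζ t)
  | .mabs c => congrArg BTm.mabs (brenLC_brenMC ξ (upr ζ) c)
theorem brenLC_brenMC (ξ ζ : ℕ → ℕ) : ∀ c, brenLC ξ (brenMC ζ c) = brenMC ζ (brenLC ξ c)
  | .cut t e => by simp only [brenLC, brenMC, brenLT_brenMT ξ ζ t, brenLE_brenME ξ ζ e]
theorem brenLE_brenME (ξ ζ : ℕ → ℕ) : ∀ e, brenLE ξ (brenME ζ e) = brenME ζ (brenLE ξ e)
  | .cvar _ => rfl
  | .cons t e => by simp only [brenLE, brenME, brenLT_brenMT ξ ζ t, brenLE_brenME ξ ζ e]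
  | .tmu c => congrArg BCt.tmu (brenLC_brenMC (upr ξ) ζ c)
end

theorem brenLT_upr_brenLT_succ (ξ : ℕ → ℕ) (t : BTm) :
    brenLT (upr ξ) (brenLT Nat.succ t) = brenLT Nat.succ (brenLT ξ t) := by
  rw [brenLT_brenLT, brenLT_brenLT, upr_comp_succ]

theorem brenLE_upr_brenLE_succ (ξ : ℕ → ℕ) (e : BCt) :
    brenLE (upr ξ) (brenLE Nat.succ e) = brenLE Nat.succ (brenLE ξ e) := by
  rw [brenLE_brenLE, brenLE_brenLE, upr_comp_succ]

theorem brenMT_upr_brenMT_succ (ξ : ℕ → ℕ) (t : BTm) :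
    brenMT (upr ξ) (brenMT Nat.succ t) = brenMT Nat.succ (brenMT ξ t) := by
  rw [brenMT_brenMT, brenMT_brenMT, upr_comp_succ]

theorem brenME_upr_brenME_succ (ξ : ℕ → ℕ) (e : BCt) :
    brenME (upr ξ) (brenME Nat.succ e) = brenME Nat.succ (brenME ξ e) := by
  rw [brenME_brenME, brenME_brenME, upr_comp_succ]

theorem bupsL_comp_upr (σ : ℕ → BTm) (ξ : ℕ → ℕ) : bupsL σ ∘ upr ξ = bupsL (σ ∘ ξ) := by
  funext k; cases k <;> rfl

theorem bupsM_comp_upr (σ : ℕ → BCt) (ξ : ℕ → ℕ) : bupsM σ ∘ upr ξ = bupsM (σ ∘ ξ) := by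
  funext k; cases k <;> rfl

mutual
theorem blsubT_brenLT (σ : ℕ → BTm) (ξ : ℕ → ℕ) : ∀ t, blsubT σ (brenLT ξ t) = blsubT (σ ∘ ξ) t
  | .var _ => rfl
  | .abs t => by simp only [brenLT, blsubT, blsubT_brenLT _ _ t, bupsL_comp_upr]
  | .mabs c => by simp only [brenLT, blsubT, blsubC_brenLC _ ξ c]; rfl
theorem blsubC_brenLC (σ : ℕ → BTm) (ξ : ℕ → ℕ) : ∀ c, blsubC σ (brenLC ξ c) = blsubC (σ ∘ ξ) c
  | .cut t e => by simp only [brenLC, blsubC, blsubT_brenLT σ ξ t, blsubE_brenLE σ ξ e]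
theorem blsubE_brenLE (σ : ℕ → BTm) (ξ : ℕ → ℕ) : ∀ e, blsubE σ (brenLE ξ e) = blsubE (σ ∘ ξ) e
  | .cvar _ => rfl
  | .cons t e => by simp only [brenLE, blsubE, blsubT_brenLT σ ξ t, blsubE_brenLE σ ξ e]
  | .tmu c => by simp only [brenLE, blsubE, blsubC_brenLC _ _ c, bupsL_comp_upr]
end

theorem brenLT_upr_comp_bupsL (ξ : ℕ → ℕ) (σ : ℕ → BTm) :
    brenLT (upr ξ) ∘ bupsL σ = bupsL (brenLT ξ ∘ σ) := by
  funext k; cases k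
  · rfl
  · exact brenLT_upr_brenLT_succ ξ _

theorem brenMT_comp_bupsL (ξ : ℕ → ℕ) (σ : ℕ → BTm) :
    brenMT ξ ∘ bupsL σ = bupsL (brenMT ξ ∘ σ) := by
  funext k; cases k
  · rfl
  · exact (brenLT_brenMT _ _ _).symm

mutual
theorem brenLT_blsubT (ξ : ℕ → ℕ) (σ : ℕ → BTm) :
    ∀ t, brenLT ξ (blsubT σ t) = blsubT (brenLT ξ ∘ σ) t
  | .var _ => rfl
  | .abs t => by simp only [blsubT, brenLT, brenLT_blsubT _ _ t, brenLT_upr_comp_bupsL]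
  | .mabs c => by
      simp only [blsubT, brenLT, brenLC_blsubC ξ _ c]
      exact congrArg _ (congrArg (blsubC · c) (funext fun k => brenLT_brenMT ξ _ (σ k)))
theorem brenLC_blsubC (ξ : ℕ → ℕ) (σ : ℕ → BTm) :
    ∀ c, brenLC ξ (blsubC σ c) = blsubC (brenLT ξ ∘ σ) c
  | .cut t e => by simp only [blsubC, brenLC, brenLT_blsubT ξ σ t, brenLE_blsubE ξ σ e]
theorem brenLE_blsubE (ξ : ℕ → ℕ) (σ : ℕ → BTm) :
    ∀ e, brenLE ξ (blsubE σ e) = blsubE (brenLT ξ ∘ σ) e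
  | .cvar _ => rfl
  | .cons t e => by simp only [blsubE, brenLE, brenLT_blsubT ξ σ t, brenLE_blsubE ξ σ e]
  | .tmu c => by simp only [blsubE, brenLE, brenLC_blsubC _ _ c, brenLT_upr_comp_bupsL]
end

mutual
theorem brenMT_blsubT (ξ : ℕ → ℕ) (σ : ℕ → BTm) :
    ∀ t, brenMT ξ (blsubT σ t) = blsubT (brenMT ξ ∘ σ) (brenMT ξ t)
  | .var _ => rfl
  | .abs t => by simp only [blsubT, brenMT, brenMT_blsubT _ _ t, brenMT_comp_bupsL]
  | .mabs c => by
      simp only [blsubT, brenMT, brenMC_blsubC _ _ c]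
      exact congrArg _ (congrArg (blsubC · _) (funext fun k => brenMT_upr_brenMT_succ ξ (σ k)))
theorem brenMC_blsubC (ξ : ℕ → ℕ) (σ : ℕ → BTm) :
    ∀ c, brenMC ξ (blsubC σ c) = blsubC (brenMT ξ ∘ σ) (brenMC ξ c)
  | .cut t e => by simp only [blsubC, brenMC, brenMT_blsubT ξ σ t, brenME_blsubE ξ σ e]
theorem brenME_blsubE (ξ : ℕ → ℕ) (σ : ℕ → BTm) :
    ∀ e, brenME ξ (blsubE σ e) = blsubE (brenMT ξ ∘ σ) (brenME ξ e)
  | .cvar _ => rfl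
  | .cons t e => by simp only [blsubE, brenME, brenMT_blsubT ξ σ t, brenME_blsubE ξ σ e]
  | .tmu c => by simp only [blsubE, brenME, brenMC_blsubC _ _ c, brenMT_comp_bupsL]
end

theorem bupsL_var : bupsL BTm.var = BTm.var := by
  funext k; cases k <;> rfl

mutual
theorem blsubT_var : ∀ t, blsubT BTm.var t = t
  | .var _ => rfl
  | .abs t => by simp only [blsubT, bupsL_var, blsubT_var t]
  | .mabs c => congrArg BTm.mabs (blsubC_var c)
theorem blsubC_var : ∀ c, blsubC BTm.var c = c
  | .cut t e => by simp only [blsubC, blsubT_var t, blsubE_var e]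
theorem blsubE_var : ∀ e, blsubE BTm.var e = e
  | .cvar _ => rfl
  | .cons t e => by simp only [blsubE, blsubT_var t, blsubE_var e]
  | .tmu c => by simp only [blsubE, bupsL_var, blsubC_var c]
end

mutual
theorem bmsubT_brenMT (σ : ℕ → BCt) (ξ : ℕ → ℕ) : ∀ t, bmsubT σ (brenMT ξ t) = bmsubT (σ ∘ ξ) t
  | .var _ => rfl
  | .abs t => by simp only [brenMT, bmsubT, bmsubT_brenMT _ ξ t]; rfl
  | .mabs c => by simp only [brenMT, bmsubT, bmsubC_brenMC _ _ c, bupsM_comp_upr]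
theorem bmsubC_brenMC (σ : ℕ → BCt) (ξ : ℕ → ℕ) : ∀ c, bmsubC σ (brenMC ξ c) = bmsubC (σ ∘ ξ) c
  | .cut t e => by simp only [brenMC, bmsubC, bmsubT_brenMT σ ξ t, bmsubE_brenME σ ξ e]
theorem bmsubE_brenME (σ : ℕ → BCt) (ξ : ℕ → ℕ) : ∀ e, bmsubE σ (brenME ξ e) = bmsubE (σ ∘ ξ) e
  | .cvar _ => rfl
  | .cons t e => by simp only [brenME, bmsubE, bmsubT_brenMT σ ξ t, bmsubE_brenME σ ξ e]
  | .tmu c => by simp only [brenME, bmsubE, bmsubC_brenMC _ ξ c]; rfl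
end

theorem brenME_upr_comp_bupsM (ξ : ℕ → ℕ) (σ : ℕ → BCt) :
    brenME (upr ξ) ∘ bupsM σ = bupsM (brenME ξ ∘ σ) := by
  funext k; cases k
  · rfl
  · exact brenME_upr_brenME_succ ξ _

theorem brenLE_comp_bupsM (ξ : ℕ → ℕ) (σ : ℕ → BCt) :
    brenLE ξ ∘ bupsM σ = bupsM (brenLE ξ ∘ σ) := by
  funext k; cases k
  · rfl
  · exact brenLE_brenME _ _ _

mutual
theorem brenMT_bmsubT (ξ : ℕ → ℕ) (σ : ℕ → BCt) :
    ∀ t, brenMT ξ (bmsubT σ t) = bmsubT (brenME ξ ∘ σ) t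
  | .var _ => rfl
  | .abs t => by
      simp only [bmsubT, brenMT, brenMT_bmsubT ξ _ t]
      exact congrArg _ (congrArg (bmsubT · t) (funext fun k => (brenLE_brenME _ ξ (σ k)).symm))
  | .mabs c => by simp only [bmsubT, brenMT, brenMC_bmsubC _ _ c, brenME_upr_comp_bupsM]
theorem brenMC_bmsubC (ξ : ℕ → ℕ) (σ : ℕ → BCt) :
    ∀ c, brenMC ξ (bmsubC σ c) = bmsubC (brenME ξ ∘ σ) c
  | .cut t e => by simp only [bmsubC, brenMC, brenMT_bmsubT ξ σ t, brenME_bmsubE ξ σ e]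
theorem brenME_bmsubE (ξ : ℕ → ℕ) (σ : ℕ → BCt) :
    ∀ e, brenME ξ (bmsubE σ e) = bmsubE (brenME ξ ∘ σ) e
  | .cvar _ => rfl
  | .cons t e => by simp only [bmsubE, brenME, brenMT_bmsubT ξ σ t, brenME_bmsubE ξ σ e]
  | .tmu c => by
      simp only [bmsubE, brenME, brenMC_bmsubC ξ _ c]
      exact congrArg _ (congrArg (bmsubC · c) (funext fun k => (brenLE_brenME _ ξ (σ k)).symm))
end

mutual
theorem brenLT_bmsubT (ξ : ℕ → ℕ) (σ : ℕ → BCt) :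
    ∀ t, brenLT ξ (bmsubT σ t) = bmsubT (brenLE ξ ∘ σ) (brenLT ξ t)
  | .var _ => rfl
  | .abs t => by
      simp only [bmsubT, brenLT, brenLT_bmsubT _ _ t]
      exact congrArg _ (congrArg (bmsubT · _) (funext fun k => brenLE_upr_brenLE_succ ξ (σ k)))
  | .mabs c => by simp only [bmsubT, brenLT, brenLC_bmsubC ξ _ c, brenLE_comp_bupsM]
theorem brenLC_bmsubC (ξ : ℕ → ℕ) (σ : ℕ → BCt) :
    ∀ c, brenLC ξ (bmsubC σ c) = bmsubC (brenLE ξ ∘ σ) (brenLC ξ c)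
  | .cut t e => by simp only [bmsubC, brenLC, brenLT_bmsubT ξ σ t, brenLE_bmsubE ξ σ e]
theorem brenLE_bmsubE (ξ : ℕ → ℕ) (σ : ℕ → BCt) :
    ∀ e, brenLE ξ (bmsubE σ e) = bmsubE (brenLE ξ ∘ σ) (brenLE ξ e)
  | .cvar _ => rfl
  | .cons t e => by simp only [bmsubE, brenLE, brenLT_bmsubT ξ σ t, brenLE_bmsubE ξ σ e]
  | .tmu c => by
      simp only [bmsubE, brenLE, brenLC_bmsubC _ _ c]
      exact congrArg _ (congrArg (bmsubC · _) (funext fun k => brenLE_upr_brenLE_succ ξ (σ k)))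
end

theorem bupsM_cvar : bupsM BCt.cvar = BCt.cvar := by
  funext k; cases k <;> rfl

mutual
theorem bmsubT_cvar : ∀ t, bmsubT BCt.cvar t = t
  | .var _ => rfl
  | .abs t => congrArg BTm.abs (bmsubT_cvar t)
  | .mabs c => by simp only [bmsubT, bupsM_cvar, bmsubC_cvar c]
theorem bmsubC_cvar : ∀ c, bmsubC BCt.cvar c = c
  | .cut t e => by simp only [bmsubC, bmsubT_cvar t, bmsubE_cvar e]
theorem bmsubE_cvar : ∀ e, bmsubE BCt.cvar e = e
  | .cvar _ => rfl
  | .cons t e => by simp only [bmsubE, bmsubT_cvar t, bmsubE_cvar e]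
  | .tmu c => congrArg BCt.tmu (bmsubC_cvar c)
end

theorem upr_eq_succ_iff {ξ : ℕ → ℕ} {a b : ℕ} (h : ∀ k, ξ k = a ↔ k = b) :
    ∀ k, upr ξ k = a + 1 ↔ k = b + 1
  | 0 => by simp [upr]
  | k + 1 => by simpa [upr] using h k

theorem upr_ne_succ {ξ : ℕ → ℕ} {a : ℕ} (h : ∀ k, ξ k ≠ a) : ∀ k, upr ξ k ≠ a + 1
  | 0 => by simp [upr]
  | k + 1 => by simpa [upr] using h k

theorem upr_eq_zero_iff (ξ : ℕ → ℕ) : ∀ k, upr ξ k = 0 ↔ k = 0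
  | 0 => by simp [upr]
  | k + 1 => by simp [upr]

mutual
theorem bcntLT_brenLT (ξ : ℕ → ℕ) {a b : ℕ} (h : ∀ k, ξ k = a ↔ k = b) :
    ∀ t, bcntLT a (brenLT ξ t) = bcntLT b t
  | .var y => if_congr (h y) rfl rfl
  | .abs t => bcntLT_brenLT (upr ξ) (upr_eq_succ_iff h) t
  | .mabs c => bcntLC_brenLC ξ h c
theorem bcntLC_brenLC (ξ : ℕ → ℕ) {a b : ℕ} (h : ∀ k, ξ k = a ↔ k = b) :
    ∀ c, bcntLC a (brenLC ξ c) = bcntLC b c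
  | .cut t e => by simp only [brenLC, bcntLC, bcntLT_brenLT ξ h t, bcntLE_brenLE ξ h e]
theorem bcntLE_brenLE (ξ : ℕ → ℕ) {a b : ℕ} (h : ∀ k, ξ k = a ↔ k = b) :
    ∀ e, bcntLE a (brenLE ξ e) = bcntLE b e
  | .cvar _ => rfl
  | .cons t e => by simp only [brenLE, bcntLE, bcntLT_brenLT ξ h t, bcntLE_brenLE ξ h e]
  | .tmu c => bcntLC_brenLC (upr ξ) (upr_eq_succ_iff h) c
end

mutual
theorem bcntLT_brenLT_eq_zero (ξ : ℕ → ℕ) {a : ℕ} (h : ∀ k, ξ k ≠ a) :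
    ∀ t, bcntLT a (brenLT ξ t) = 0
  | .var y => if_neg (h y)
  | .abs t => bcntLT_brenLT_eq_zero (upr ξ) (upr_ne_succ h) t
  | .mabs c => bcntLC_brenLC_eq_zero ξ h c
theorem bcntLC_brenLC_eq_zero (ξ : ℕ → ℕ) {a : ℕ} (h : ∀ k, ξ k ≠ a) :
    ∀ c, bcntLC a (brenLC ξ c) = 0
  | .cut t e => by
      simp only [brenLC, bcntLC, bcntLT_brenLT_eq_zero ξ h t, bcntLE_brenLE_eq_zero ξ h e]
theorem bcntLE_brenLE_eq_zero (ξ : ℕ → ℕ) {a : ℕ} (h : ∀ k, ξ k ≠ a) :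
    ∀ e, bcntLE a (brenLE ξ e) = 0
  | .cvar _ => rfl
  | .cons t e => by
      simp only [brenLE, bcntLE, bcntLT_brenLT_eq_zero ξ h t, bcntLE_brenLE_eq_zero ξ h e]
  | .tmu c => bcntLC_brenLC_eq_zero (upr ξ) (upr_ne_succ h) c
end

mutual
theorem bcntLT_brenMT (ξ : ℕ → ℕ) (a : ℕ) : ∀ t, bcntLT a (brenMT ξ t) = bcntLT a t
  | .var _ => rfl
  | .abs t => bcntLT_brenMT ξ (a + 1) t
  | .mabs c => bcntLC_brenMC (upr ξ) a c
theorem bcntLC_brenMC (ξ : ℕ → ℕ) (a : ℕ) : ∀ c, bcntLC a (brenMC ξ c) = bcntLC a c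
  | .cut t e => by simp only [brenMC, bcntLC, bcntLT_brenMT ξ a t, bcntLE_brenME ξ a e]
theorem bcntLE_brenME (ξ : ℕ → ℕ) (a : ℕ) : ∀ e, bcntLE a (brenME ξ e) = bcntLE a e
  | .cvar _ => rfl
  | .cons t e => by simp only [brenME, bcntLE, bcntLT_brenMT ξ a t, bcntLE_brenME ξ a e]
  | .tmu c => bcntLC_brenMC ξ (a + 1) c
end

mutual
theorem bcntMT_brenMT (ξ : ℕ → ℕ) {a b : ℕ} (h : ∀ k, ξ k = a ↔ k = b) :
    ∀ t, bcntMT a (brenMT ξ t) = bcntMT b t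
  | .var _ => rfl
  | .abs t => bcntMT_brenMT ξ h t
  | .mabs c => bcntMC_brenMC (upr ξ) (upr_eq_succ_iff h) c
theorem bcntMC_brenMC (ξ : ℕ → ℕ) {a b : ℕ} (h : ∀ k, ξ k = a ↔ k = b) :
    ∀ c, bcntMC a (brenMC ξ c) = bcntMC b c
  | .cut t e => by simp only [brenMC, bcntMC, bcntMT_brenMT ξ h t, bcntME_brenME ξ h e]
theorem bcntME_brenME (ξ : ℕ → ℕ) {a b : ℕ} (h : ∀ k, ξ k = a ↔ k = b) :
    ∀ e, bcntME a (brenME ξ e) = bcntME b e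
  | .cvar y => if_congr (h y) rfl rfl
  | .cons t e => by simp only [brenME, bcntME, bcntMT_brenMT ξ h t, bcntME_brenME ξ h e]
  | .tmu c => bcntMC_brenMC ξ h c
end

mutual
theorem bcntMT_brenMT_eq_zero (ξ : ℕ → ℕ) {a : ℕ} (h : ∀ k, ξ k ≠ a) :
    ∀ t, bcntMT a (brenMT ξ t) = 0
  | .var _ => rfl
  | .abs t => bcntMT_brenMT_eq_zero ξ h t
  | .mabs c => bcntMC_brenMC_eq_zero (upr ξ) (upr_ne_succ h) c
theorem bcntMC_brenMC_eq_zero (ξ : ℕ → ℕ) {a : ℕ} (h : ∀ k, ξ k ≠ a) :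
    ∀ c, bcntMC a (brenMC ξ c) = 0
  | .cut t e => by
      simp only [brenMC, bcntMC, bcntMT_brenMT_eq_zero ξ h t, bcntME_brenME_eq_zero ξ h e]
theorem bcntME_brenME_eq_zero (ξ : ℕ → ℕ) {a : ℕ} (h : ∀ k, ξ k ≠ a) :
    ∀ e, bcntME a (brenME ξ e) = 0
  | .cvar y => if_neg (h y)
  | .cons t e => by
      simp only [brenME, bcntME, bcntMT_brenMT_eq_zero ξ h t, bcntME_brenME_eq_zero ξ h e]
  | .tmu c => bcntMC_brenMC_eq_zero ξ h c
end

mutual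
theorem bcntMT_brenLT (ξ : ℕ → ℕ) (a : ℕ) : ∀ t, bcntMT a (brenLT ξ t) = bcntMT a t
  | .var _ => rfl
  | .abs t => bcntMT_brenLT (upr ξ) a t
  | .mabs c => bcntMC_brenLC ξ (a + 1) c
theorem bcntMC_brenLC (ξ : ℕ → ℕ) (a : ℕ) : ∀ c, bcntMC a (brenLC ξ c) = bcntMC a c
  | .cut t e => by simp only [brenLC, bcntMC, bcntMT_brenLT ξ a t, bcntME_brenLE ξ a e]
theorem bcntME_brenLE (ξ : ℕ → ℕ) (a : ℕ) : ∀ e, bcntME a (brenLE ξ e) = bcntME a e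
  | .cvar _ => rfl
  | .cons t e => by simp only [brenLE, bcntME, bcntMT_brenLT ξ a t, bcntME_brenLE ξ a e]
  | .tmu c => bcntMC_brenLC (upr ξ) a c
end

theorem brenLC_bmsubC_bsub0M (ξ : ℕ → ℕ) (e : BCt) (c : BCm) :
    brenLC ξ (bmsubC (bsub0M e) c) = bmsubC (bsub0M (brenLE ξ e)) (brenLC ξ c) := by
  rw [brenLC_bmsubC]
  congr 1; funext k; cases k <;> rfl

theorem brenMC_bmsubC_bsub0M (ξ : ℕ → ℕ) (e : BCt) (c : BCm) :
    brenMC ξ (bmsubC (bsub0M e) c) = bmsubC (bsub0M (brenME ξ e)) (brenMC (upr ξ) c) := by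
  rw [brenMC_bmsubC, bmsubC_brenMC]
  congr 1; funext k; cases k <;> rfl

theorem brenLC_blsubC_bsub0L (ξ : ℕ → ℕ) (t : BTm) (c : BCm) :
    brenLC ξ (blsubC (bsub0L t) c) = blsubC (bsub0L (brenLT ξ t)) (brenLC (upr ξ) c) := by
  rw [brenLC_blsubC, blsubC_brenLC]
  congr 1; funext k; cases k <;> rfl

theorem brenMC_blsubC_bsub0L (ξ : ℕ → ℕ) (t : BTm) (c : BCm) :
    brenMC ξ (blsubC (bsub0L t) c) = blsubC (bsub0L (brenMT ξ t)) (brenMC ξ c) := by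
  rw [brenMC_blsubC]
  congr 1; funext k; cases k <;> rfl

theorem BRootT.renL (ξ : ℕ → ℕ) {t t' : BTm} (h : BRootT t t') :
    BRootT (brenLT ξ t) (brenLT ξ t') := by
  cases h with
  | theta t => simpa only [brenLT, brenLC, brenLE, brenLT_brenMT] using BRootT.theta _

theorem BRootT.renM (ξ : ℕ → ℕ) {t t' : BTm} (h : BRootT t t') :
    BRootT (brenMT ξ t) (brenMT ξ t') := by
  cases h with
  | theta t => simpa only [brenMT, brenMC, brenME, brenMT_upr_brenMT_succ, upr] using BRootT.theta _

theorem BRootC.renL (ξ : ℕ → ℕ) {c c' : BCm} (h : BRootC c c') :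
    BRootC (brenLC ξ c) (brenLC ξ c') := by
  cases h with
  | beta u t e => simpa only [brenLC, brenLT, brenLE, brenLE_upr_brenLE_succ] using .beta _ _ _
  | mu c e => simpa only [brenLC_bmsubC_bsub0M] using .mu _ _
  | mutilde t c => simpa only [brenLC_blsubC_bsub0L] using .mutilde _ _

theorem BRootC.renM (ξ : ℕ → ℕ) {c c' : BCm} (h : BRootC c c') :
    BRootC (brenMC ξ c) (brenMC ξ c') := by
  cases h with
  | beta u t e => simpa only [brenMC, brenMT, brenME, ← brenLE_brenME] using .beta _ _ _
  | mu c e => simpa only [brenMC_bmsubC_bsub0M] using .mu _ _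
  | mutilde t c => simpa only [brenMC_blsubC_bsub0L] using .mutilde _ _

theorem BRootClin.renL (ξ : ℕ → ℕ) {c c' : BCm} (h : BRootClin c c') :
    BRootClin (brenLC ξ c) (brenLC ξ c') := by
  cases h with
  | beta u t e => simpa only [brenLC, brenLT, brenLE, brenLE_upr_brenLE_succ] using .beta _ _ _
  | mu c e hc =>
      rw [brenLC_bmsubC_bsub0M]
      refine .mu _ _ ?_
      rcases hc with ⟨a, rfl⟩ | hc
      · exact .inl ⟨a, rfl⟩
      · exact .inr ((bcntMC_brenLC ξ 0 c).trans hc)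
  | mutilde t c hc =>
      rw [brenLC_blsubC_bsub0L]
      refine .mutilde _ _ ?_
      rcases hc with ⟨x, rfl⟩ | hc
      · exact .inl ⟨ξ x, rfl⟩
      · exact .inr ((bcntLC_brenLC (upr ξ) (upr_eq_zero_iff ξ) c).trans hc)

theorem BRootClin.renM (ξ : ℕ → ℕ) {c c' : BCm} (h : BRootClin c c') :
    BRootClin (brenMC ξ c) (brenMC ξ c') := by
  cases h with
  | beta u t e => simpa only [brenMC, brenMT, brenME, ← brenLE_brenME] using .beta _ _ _
  | mu c e hc =>
      rw [brenMC_bmsubC_bsub0M]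
      refine .mu _ _ ?_
      rcases hc with ⟨a, rfl⟩ | hc
      · exact .inl ⟨ξ a, rfl⟩
      · exact .inr ((bcntMC_brenMC (upr ξ) (upr_eq_zero_iff ξ) c).trans hc)
  | mutilde t c hc =>
      rw [brenMC_blsubC_bsub0L]
      refine .mutilde _ _ ?_
      rcases hc with ⟨x, rfl⟩ | hc
      · exact .inl ⟨x, rfl⟩
      · exact .inr ((bcntLC_brenMC ξ 0 c).trans hc)

structure RenamingStable (R1 : BTm → BTm → Prop) (R2 : BCm → BCm → Prop) : Prop where
  tm_renL : ∀ (ξ : ℕ → ℕ) {t t'}, R1 t t' → R1 (brenLT ξ t) (brenLT ξ t')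
  cm_renL : ∀ (ξ : ℕ → ℕ) {c c'}, R2 c c' → R2 (brenLC ξ c) (brenLC ξ c')
  tm_renM : ∀ (ξ : ℕ → ℕ) {t t'}, R1 t t' → R1 (brenMT ξ t) (brenMT ξ t')
  cm_renM : ∀ (ξ : ℕ → ℕ) {c c'}, R2 c c' → R2 (brenMC ξ c) (brenMC ξ c')

theorem renamingStable_BRootC : RenamingStable BRootT BRootC :=
  ⟨BRootT.renL, BRootC.renL, BRootT.renM, BRootC.renM⟩

theorem renamingStable_BRootClin : RenamingStable BRootT BRootClin :=
  ⟨BRootT.renL, BRootClin.renL, BRootT.renM, BRootClin.renM⟩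

section Congruence

variable {R1 : BTm → BTm → Prop} {R2 : BCm → BCm → Prop}

mutual
theorem JT.renL (hR : RenamingStable R1 R2) (ξ : ℕ → ℕ) {t t' : BTm} :
    JT R1 R2 t t' → JT R1 R2 (brenLT ξ t) (brenLT ξ t')
  | .root h => .root (hR.tm_renL ξ h)
  | .absC h => .absC (JT.renL hR (upr ξ) h)
  | .mabsC h => .mabsC (JC.renL hR ξ h)
theorem JC.renL (hR : RenamingStable R1 R2) (ξ : ℕ → ℕ) {c c' : BCm} :
    JC R1 R2 c c' → JC R1 R2 (brenLC ξ c) (brenLC ξ c')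
  | .root h => .root (hR.cm_renL ξ h)
  | .cutL _ h => .cutL _ (JT.renL hR ξ h)
  | .cutR _ h => .cutR _ (JE.renL hR ξ h)
theorem JE.renL (hR : RenamingStable R1 R2) (ξ : ℕ → ℕ) {e e' : BCt} :
    JE R1 R2 e e' → JE R1 R2 (brenLE ξ e) (brenLE ξ e')
  | .consL _ h => .consL _ (JT.renL hR ξ h)
  | .consR _ h => .consR _ (JE.renL hR ξ h)
  | .tmuC h => .tmuC (JC.renL hR (upr ξ) h)
end

mutual
theorem JT.renM (hR : RenamingStable R1 R2) (ξ : ℕ → ℕ) {t t' : BTm} :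
    JT R1 R2 t t' → JT R1 R2 (brenMT ξ t) (brenMT ξ t')
  | .root h => .root (hR.tm_renM ξ h)
  | .absC h => .absC (JT.renM hR ξ h)
  | .mabsC h => .mabsC (JC.renM hR (upr ξ) h)
theorem JC.renM (hR : RenamingStable R1 R2) (ξ : ℕ → ℕ) {c c' : BCm} :
    JC R1 R2 c c' → JC R1 R2 (brenMC ξ c) (brenMC ξ c')
  | .root h => .root (hR.cm_renM ξ h)
  | .cutL _ h => .cutL _ (JT.renM hR ξ h)
  | .cutR _ h => .cutR _ (JE.renM hR ξ h)
theorem JE.renM (hR : RenamingStable R1 R2) (ξ : ℕ → ℕ) {e e' : BCt} :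
    JE R1 R2 e e' → JE R1 R2 (brenME ξ e) (brenME ξ e')
  | .consL _ h => .consL _ (JT.renM hR ξ h)
  | .consR _ h => .consR _ (JE.renM hR ξ h)
  | .tmuC h => .tmuC (JC.renM hR ξ h)
end

theorem star_renL (hR : RenamingStable R1 R2) (ξ : ℕ → ℕ) {t t' : BTm}
    (h : Star (JT R1 R2) t t') : Star (JT R1 R2) (brenLT ξ t) (brenLT ξ t') :=
  h.lift (brenLT ξ) fun _ _ => JT.renL hR ξ

theorem star_renM (hR : RenamingStable R1 R2) (ξ : ℕ → ℕ) {t t' : BTm}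
    (h : Star (JT R1 R2) t t') : Star (JT R1 R2) (brenMT ξ t) (brenMT ξ t') :=
  h.lift (brenMT ξ) fun _ _ => JT.renM hR ξ

theorem star_abs {t t' : BTm} (h : Star (JT R1 R2) t t') :
    Star (JT R1 R2) (.abs t) (.abs t') :=
  h.lift BTm.abs fun _ _ => JT.absC

theorem star_mabs {c c' : BCm} (h : Star (JC R1 R2) c c') :
    Star (JT R1 R2) (.mabs c) (.mabs c') :=
  h.lift BTm.mabs fun _ _ => JT.mabsC

theorem star_cutL (e : BCt) {t t' : BTm} (h : Star (JT R1 R2) t t') :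
    Star (JC R1 R2) (.cut t e) (.cut t' e) :=
  h.lift (BCm.cut · e) fun _ _ => JC.cutL e

theorem star_cutR (t : BTm) {e e' : BCt} (h : Star (JE R1 R2) e e') :
    Star (JC R1 R2) (.cut t e) (.cut t e') :=
  h.lift (BCm.cut t) fun _ _ => JC.cutR t

theorem star_tmu {c c' : BCm} (h : Star (JC R1 R2) c c') :
    Star (JE R1 R2) (.tmu c) (.tmu c') :=
  h.lift BCt.tmu fun _ _ => JE.tmuC

end Congruence

/-- `μ̃y.⟨u | y · e⟩`; `(⟨β⟩(u ·))† = appCtx u† β` and `(u v)† = μβ.⟨v† | appCtx u† β⟩`. -/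
def appCtx (u : BTm) (e : BCt) : BCt :=
  .tmu (.cut (brenLT Nat.succ u) (.cons (.var 0) (brenLE Nat.succ e)))

def dagApp (u v : BTm) : BTm :=
  .mabs (.cut (brenMT Nat.succ v) (appCtx (brenMT Nat.succ u) (.cvar 0)))

theorem dagT_app (u v : Tm) : dagT (.app u v) = dagApp (dagT u) (dagT v) := rfl

theorem dagE_push (b : ℕ) (t : Tm) : dagE (.push b t) = appCtx (dagT t) (.cvar b) := rfl

theorem brenLE_appCtx (ξ : ℕ → ℕ) (u : BTm) (e : BCt) :
    brenLE ξ (appCtx u e) = appCtx (brenLT ξ u) (brenLE ξ e) := by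
  simp only [appCtx, brenLE, brenLC, brenLT_upr_brenLT_succ, brenLE_upr_brenLE_succ]; rfl

theorem brenME_appCtx (ξ : ℕ → ℕ) (u : BTm) (e : BCt) :
    brenME ξ (appCtx u e) = appCtx (brenMT ξ u) (brenME ξ e) := by
  simp only [appCtx, brenME, brenMC, brenMT, ← brenLT_brenMT, ← brenLE_brenME]

theorem blsubE_appCtx (σ : ℕ → BTm) (u : BTm) (e : BCt) :
    blsubE σ (appCtx u e) = appCtx (blsubT σ u) (blsubE σ e) := by
  simp only [appCtx, blsubE, blsubC, blsubT, blsubT_brenLT, blsubE_brenLE, brenLT_blsubT,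
    brenLE_blsubE]; rfl

theorem bmsubE_appCtx (σ : ℕ → BCt) (u : BTm) (e : BCt) :
    bmsubE σ (appCtx u e) = appCtx (bmsubT σ u) (bmsubE σ e) := by
  simp only [appCtx, bmsubE, bmsubC, bmsubT, brenLT_bmsubT, brenLE_bmsubE]; rfl

theorem brenLT_dagApp (ξ : ℕ → ℕ) (u v : BTm) :
    brenLT ξ (dagApp u v) = dagApp (brenLT ξ u) (brenLT ξ v) := by
  simp only [dagApp, brenLT, brenLC, brenLE_appCtx, brenLT_brenMT]; rfl

theorem brenMT_dagApp (ξ : ℕ → ℕ) (u v : BTm) :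
    brenMT ξ (dagApp u v) = dagApp (brenMT ξ u) (brenMT ξ v) := by
  simp only [dagApp, brenMT, brenMC, brenME_appCtx, brenMT_upr_brenMT_succ]; rfl

theorem blsubT_dagApp (σ : ℕ → BTm) (u v : BTm) :
    blsubT σ (dagApp u v) = dagApp (blsubT σ u) (blsubT σ v) := by
  simp only [dagApp, blsubT, blsubC, blsubE_appCtx, brenMT_blsubT]; rfl

theorem bmsubT_dagApp (σ : ℕ → BCt) (u v : BTm) :
    bmsubT σ (dagApp u v) = dagApp (bmsubT σ u) (bmsubT σ v) := by
  simp only [dagApp, bmsubT, bmsubC, bmsubE_appCtx, bmsubT_brenMT, brenMT_bmsubT]; rfl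

mutual
theorem dagT_renL (ξ : ℕ → ℕ) : ∀ t, dagT (renLT ξ t) = brenLT ξ (dagT t)
  | .var _ => rfl
  | .abs t => congrArg BTm.abs (dagT_renL (upr ξ) t)
  | .app u v => by rw [renLT, dagT_app, dagT_app, dagT_renL ξ u, dagT_renL ξ v, brenLT_dagApp]
  | .mabs c => congrArg BTm.mabs (dagC_renL ξ c)
theorem dagC_renL (ξ : ℕ → ℕ) : ∀ c, dagC (renLC ξ c) = brenLC ξ (dagC c)
  | .cmd a t => by simp only [renLC, dagC, dagT_renL ξ t, brenLC, brenLE]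
end

mutual
theorem dagT_renM (ξ : ℕ → ℕ) : ∀ t, dagT (renMT ξ t) = brenMT ξ (dagT t)
  | .var _ => rfl
  | .abs t => congrArg BTm.abs (dagT_renM ξ t)
  | .app u v => by rw [renMT, dagT_app, dagT_app, dagT_renM ξ u, dagT_renM ξ v, brenMT_dagApp]
  | .mabs c => congrArg BTm.mabs (dagC_renM (upr ξ) c)
theorem dagC_renM (ξ : ℕ → ℕ) : ∀ c, dagC (renMC ξ c) = brenMC ξ (dagC c)
  | .cmd a t => by simp only [renMC, dagC, dagT_renM ξ t, brenMC, brenME]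
end

theorem dagE_renL (ξ : ℕ → ℕ) : ∀ e, dagE (renLE ξ e) = brenLE ξ (dagE e)
  | .cvar _ => rfl
  | .push b t => by rw [renLE, dagE_push, dagE_push, dagT_renL, brenLE_appCtx]; rfl
  | .cons e t => by simp only [renLE, dagE, dagT_renL ξ t, dagE_renL ξ e, brenLE]

theorem dagE_renM (ξ : ℕ → ℕ) : ∀ e, dagE (renME ξ e) = brenME ξ (dagE e)
  | .cvar _ => rfl
  | .push b t => by rw [renME, dagE_push, dagE_push, dagT_renM, brenME_appCtx]; rfl
  | .cons e t => by simp only [renME, dagE, dagT_renM ξ t, dagE_renM ξ e, brenME]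

theorem dagT_comp_upsL (σ : ℕ → Tm) : dagT ∘ upsL σ = bupsL (dagT ∘ σ) := by
  funext k; cases k
  · rfl
  · exact dagT_renL _ _

mutual
theorem dagT_lsubT (σ : ℕ → Tm) : ∀ t, dagT (lsubT σ t) = blsubT (dagT ∘ σ) (dagT t)
  | .var _ => rfl
  | .abs t => by simp only [lsubT, dagT, dagT_lsubT (upsL σ) t, blsubT, dagT_comp_upsL]
  | .app u v => by rw [lsubT, dagT_app, dagT_app, dagT_lsubT σ u, dagT_lsubT σ v, blsubT_dagApp]
  | .mabs c => by
      simp only [lsubT, dagT, dagC_lsubC _ c, blsubT]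
      exact congrArg _ (congrArg (blsubC · _) (funext fun k => dagT_renM Nat.succ (σ k)))
theorem dagC_lsubC (σ : ℕ → Tm) : ∀ c, dagC (lsubC σ c) = blsubC (dagT ∘ σ) (dagC c)
  | .cmd a t => by simp only [lsubC, dagC, dagT_lsubT σ t, blsubC, blsubE]
end

theorem bsub0M_comp_succ (e : BCt) : bsub0M e ∘ Nat.succ = BCt.cvar := rfl

theorem bsub0L_comp_succ (t : BTm) : bsub0L t ∘ Nat.succ = BTm.var := rfl

theorem BRootClin.cut_dagApp (u v : BTm) (e : BCt) :
    BRootClin (.cut (dagApp u v) e) (.cut v (appCtx u e)) := by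
  have hlin : bcntMC 0 (.cut (brenMT Nat.succ v) (appCtx (brenMT Nat.succ u) (.cvar 0))) = 1 := by
    simp [appCtx, brenLE, bcntMC, bcntME, bcntMT, bcntMT_brenLT,
      bcntMT_brenMT_eq_zero Nat.succ Nat.succ_ne_zero]
  have h := BRootClin.mu _ e (.inr hlin)
  simp only [bmsubC, bmsubE_appCtx, bmsubT_brenMT, bsub0M_comp_succ, bmsubT_cvar] at h
  exact h

theorem BRootClin.cut_appCtx (u v : BTm) (e : BCt) :
    BRootClin (.cut v (appCtx u e)) (.cut u (.cons v e)) := by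
  have hlin : bcntLC 0 (.cut (brenLT Nat.succ u) (.cons (.var 0) (brenLE Nat.succ e))) = 1 := by
    simp [bcntLC, bcntLE, bcntLT, bcntLT_brenLT_eq_zero Nat.succ Nat.succ_ne_zero,
      bcntLE_brenLE_eq_zero Nat.succ Nat.succ_ne_zero]
  have h := BRootClin.mutilde v _ (.inr hlin)
  simp only [blsubC, blsubE, blsubT_brenLT, blsubE_brenLE, bsub0L_comp_succ, blsubT_var,
    blsubE_var] at h
  exact h

theorem star_cut_dagApp (u v : BTm) (e : BCt) :
    Star LBStepC (.cut (dagApp u v) e) (.cut u (.cons v e)) :=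
  .head (.root (.cut_dagApp u v e)) (.single (.root (.cut_appCtx u v e)))

theorem star_dagC_fill :
    ∀ (e : Ct) (t : Tm), Star LBStepC (dagC (fill e t)) (.cut (dagT t) (dagE e))
  | .cvar _, _ => .refl
  | .push b u, t => .single (.root (.cut_dagApp (dagT u) (dagT t) (.cvar b)))
  | .cons h u, t => (star_dagC_fill h (.app t u)).trans (star_cut_dagApp _ _ _)

theorem dagE_comp_upsM (σ : ℕ → Ct) : dagE ∘ upsM σ = bupsM (dagE ∘ σ) := by
  funext k; cases k
  · rfl
  · exact dagE_renM _ _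

theorem star_dagApp {R1 : BTm → BTm → Prop} {R2 : BCm → BCm → Prop} (hR : RenamingStable R1 R2)
    {u u' v v' : BTm} (hu : Star (JT R1 R2) u u') (hv : Star (JT R1 R2) v v') :
    Star (JT R1 R2) (dagApp u v) (dagApp u' v') :=
  star_mabs <| (star_cutL _ (star_renM hR _ hv)).trans <| star_cutR _ <| star_tmu <|
    star_cutL _ <| star_renL hR _ <| star_renM hR _ hu

mutual
theorem star_dagT_msubT (σ : ℕ → Ct) :
    ∀ t, Star LBStepT (dagT (msubT σ t)) (bmsubT (dagE ∘ σ) (dagT t))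
  | .var _ => .refl
  | .abs t => by
      have h := star_dagT_msubT (renLE Nat.succ ∘ σ) t
      rw [show dagE ∘ (renLE Nat.succ ∘ σ) = brenLE Nat.succ ∘ (dagE ∘ σ) from
        funext fun k => dagE_renL _ (σ k)] at h
      exact star_abs h
  | .app u v => by
      rw [msubT, dagT_app, dagT_app, bmsubT_dagApp]
      exact star_dagApp renamingStable_BRootClin (star_dagT_msubT σ u) (star_dagT_msubT σ v)
  | .mabs c => by
      have h := star_dagC_msubC (upsM σ) c
      rw [dagE_comp_upsM] at h
      exact star_mabs h
theorem star_dagC_msubC (σ : ℕ → Ct) :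
    ∀ c, Star LBStepC (dagC (msubC σ c)) (bmsubC (dagE ∘ σ) (dagC c))
  | .cmd a t => (star_dagC_fill (σ a) (msubT σ t)).trans (star_cutL _ (star_dagT_msubT σ t))
end

theorem BRootClin.toBRootC {c c' : BCm} : BRootClin c c' → BRootC c c'
  | .beta u t e => .beta u t e
  | .mu c e _ => .mu c e
  | .mutilde t c _ => .mutilde t c

theorem dagT_comp_sub0L (t : Tm) : dagT ∘ sub0L t = bsub0L (dagT t) := by
  funext k; cases k <;> rfl

theorem brenMT_comp_bsub0L (ξ : ℕ → ℕ) (t : BTm) : brenMT ξ ∘ bsub0L t = bsub0L (brenMT ξ t) := by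
  funext k; cases k <;> rfl

theorem dagE_comp_sub0M (e : Ct) : dagE ∘ sub0M e = bsub0M (dagE e) := by
  funext k; cases k <;> rfl

theorem dagE_comp_sub1M (a : ℕ) (e : Ct) : dagE ∘ sub1M a e = bsub1M a (dagE e) := by
  funext k; simp only [Function.comp, sub1M, bsub1M]; split_ifs <;> rfl

theorem bsub0M_comp_upr_succ (e : BCt) : bsub0M e ∘ upr Nat.succ = bsub1M 0 e := by
  funext k; cases k <;> rfl

theorem star_dagT_beta (u t : Tm) :
    Star BStepT (dagT (.app (.abs u) t)) (dagT (lsubT (sub0L t) u)) := by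
  have hsub : blsubT (bsub0L (brenMT Nat.succ (dagT t))) (brenMT Nat.succ (dagT u)) =
      brenMT Nat.succ (dagT (lsubT (sub0L t) u)) := by
    rw [dagT_lsubT, dagT_comp_sub0L, brenMT_blsubT, brenMT_comp_bsub0L]
  refine .head (.mabsC (.root (BRootClin.cut_appCtx _ _ (.cvar 0)).toBRootC)) ?_
  refine .head (.mabsC (.root (.beta _ _ _))) ?_
  refine .head (.mabsC (.root (.mutilde _ _))) ?_
  rw [blsubC, hsub]
  exact .single (.root (.theta _))

theorem star_dagT_mu (c : Cm) (t : Tm) :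
    Star BStepT (dagT (.app (.mabs c) t))
      (.mabs (bmsubC (dagE ∘ sub1M 0 (.cons (.cvar 0) (renMT Nat.succ t))) (dagC c))) := by
  refine .head (.mabsC (.root (BRootClin.cut_appCtx _ _ (.cvar 0)).toBRootC)) ?_
  refine .single (.mabsC (.root ?_))
  rw [dagE_comp_sub1M, dagE, dagT_renM, ← bsub0M_comp_upr_succ, ← bmsubC_brenMC]
  exact .mu _ _

theorem star_dagT_mu' (t : Tm) (c : Cm) :
    Star BStepT (dagT (.app t (.mabs c)))
      (.mabs (bmsubC (dagE ∘ sub1M 0 (.push 0 (renMT Nat.succ t))) (dagC c))) := by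
  refine .single (.mabsC (.root ?_))
  rw [dagE_comp_sub1M, dagE_push, dagT_renM, ← bsub0M_comp_upr_succ, ← bmsubC_brenMC]
  exact .mu _ _

theorem simulation_rootT {t v : Tm} (h : RootT t v) :
    ∃ u : BTm, Star BStepT (dagT t) u ∧ Star LBStepT (dagT v) u := by
  cases h with
  | beta u t => exact ⟨_, star_dagT_beta u t, .refl⟩
  | mu c t => exact ⟨_, star_dagT_mu c t, star_mabs (star_dagC_msubC _ c)⟩
  | mu' t c => exact ⟨_, star_dagT_mu' t c, star_mabs (star_dagC_msubC _ c)⟩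
  | theta t =>
      refine ⟨_, .single (.root ?_), .refl⟩
      rw [dagT, dagC, dagT_renM]
      exact .theta _

theorem simulation_rootC {c d : Cm} (h : RootC c d) :
    ∃ u : BCm, Star BStepC (dagC c) u ∧ Star LBStepC (dagC d) u := by
  cases h with
  | rho b c =>
      refine ⟨_, .single (.root (.mu (dagC c) _)), ?_⟩
      simpa only [dagE_comp_sub0M, dagE] using star_dagC_msubC (sub0M (.cvar b)) c

mutual
theorem simulation_stepT {t v : Tm} :
    StepT t v → ∃ u : BTm, Star BStepT (dagT t) u ∧ Star LBStepT (dagT v) u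
  | .root h => simulation_rootT h
  | .absC h =>
      have ⟨u, h₁, h₂⟩ := simulation_stepT h
      ⟨.abs u, star_abs h₁, star_abs h₂⟩
  | .appL _ h =>
      have ⟨u, h₁, h₂⟩ := simulation_stepT h
      ⟨dagApp u _, star_dagApp renamingStable_BRootC h₁ .refl,
        star_dagApp renamingStable_BRootClin h₂ .refl⟩
  | .appR _ h =>
      have ⟨u, h₁, h₂⟩ := simulation_stepT h
      ⟨dagApp _ u, star_dagApp renamingStable_BRootC .refl h₁,
        star_dagApp renamingStable_BRootClin .refl h₂⟩
  | .mabsC h =>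
      have ⟨u, h₁, h₂⟩ := simulation_stepC h
      ⟨.mabs u, star_mabs h₁, star_mabs h₂⟩
theorem simulation_stepC {c d : Cm} :
    StepC c d → ∃ u : BCm, Star BStepC (dagC c) u ∧ Star LBStepC (dagC d) u
  | .root h => simulation_rootC h
  | .cmdC a h =>
      have ⟨u, h₁, h₂⟩ := simulation_stepT h
      ⟨.cut u (.cvar a), star_cutL _ h₁, star_cutL _ h₂⟩
end

/-- simulation of λμ by λ̄μμ̃.  If `t` reduces to `v` by one
λμ-step (β, μ, μ', ρ or θ), then there is `u` with `t† →* u` in λ̄μμ̃ and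
`v† →lin* u`; and likewise for commands. -/
theorem lm_lmm_simulation :
    (∀ t v : Tm, StepT t v →
      ∃ u : BTm, Star BStepT (dagT t) u ∧ Star LBStepT (dagT v) u) ∧
    (∀ c d : Cm, StepC c d →
      ∃ u : BCm, Star BStepC (dagC c) u ∧ Star LBStepC (dagC d) u) :=
  ⟨fun _ _ => simulation_stepT, fun _ _ => simulation_stepC⟩

end CHSim
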